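/- Let H be k-edge-connected with k odd, and U ⊆ E(H). Then the family F_1(H) = { S nonempty proper : d(S) = k, d_U(S) ≥ 1 } is laminar: any two members A, B of F_1(H) satisfy A ⊆ B, B ⊆ A, or A ∩ B = ∅, or A ∪ B = V. -/

import Mathlib

/-!
If two `k`-cuts `A`, `B` crossed, all four corners would be cuts, hence of size `≥ k`. The
uncrossing identities `d(A) + d(B) = d(A ∩ B) + d(A ∪ B) + 2 d(A \ B, B \ A)` and
`d(A) + d(B) = d(A \ B) + d(B \ A) + 2 d(A ∩ B, V \ (A ∪ B))` then force
`d(A ∩ B) = d(A \ B) = k`, while `d(A ∩ B) + d(A \ B) ≡ d(A) (mod 2)` gives `2k ≡ k`,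
contradicting `k` odd.
-/

open Finset

/-- Number of edges of the multigraph (edges indexed by `ι` with endpoint maps
`fst`, `snd`) that lie in `J` and have exactly one endpoint in `S`. -/
def cutCard {V ι : Type} [DecidableEq V] [DecidableEq ι]
    (fst snd : ι → V) (J : Finset ι) (S : Finset V) : ℕ :=
  (J.filter (fun e => (fst e ∈ S ∧ snd e ∉ S) ∨ (snd e ∈ S ∧ fst e ∉ S))).card

/-- Number of edges in `J` with one endpoint in `X` and the other in `Y`. -/
def btw {V ι : Type} [DecidableEq V] [DecidableEq ι]
    (fst snd : ι → V) (J : Finset ι) (X Y : Finset V) : ℕ :=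
  (J.filter (fun e => (fst e ∈ X ∧ snd e ∈ Y) ∨ (fst e ∈ Y ∧ snd e ∈ X))).card

lemma cutCard_eq_sum {V ι : Type} [DecidableEq V] [DecidableEq ι]
    (fst snd : ι → V) (J : Finset ι) (S : Finset V) :
    cutCard fst snd J S =
      ∑ e ∈ J, if (fst e ∈ S ∧ snd e ∉ S) ∨ (snd e ∈ S ∧ fst e ∉ S) then 1 else 0 :=
  card_filter _ _

lemma btw_eq_sum {V ι : Type} [DecidableEq V] [DecidableEq ι]
    (fst snd : ι → V) (J : Finset ι) (X Y : Finset V) :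
    btw fst snd J X Y =
      ∑ e ∈ J, if (fst e ∈ X ∧ snd e ∈ Y) ∨ (fst e ∈ Y ∧ snd e ∈ X) then 1 else 0 :=
  card_filter _ _

section CutIdentities

variable {V ι : Type} [DecidableEq V] [DecidableEq ι] (fst snd : ι → V) (J : Finset ι)

lemma cutCard_add_cutCard_eq_inter_add_union (A B : Finset V) :
    cutCard fst snd J A + cutCard fst snd J B =
      cutCard fst snd J (A ∩ B) + cutCard fst snd J (A ∪ B) +
        2 * btw fst snd J (A \ B) (B \ A) := by
  simp only [cutCard_eq_sum, btw_eq_sum, mul_sum, ← sum_add_distrib]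
  refine sum_congr rfl fun e _ => ?_
  by_cases h1 : fst e ∈ A <;> by_cases h2 : fst e ∈ B <;>
    by_cases h3 : snd e ∈ A <;> by_cases h4 : snd e ∈ B <;>
    simp [h1, h2, h3, h4]

lemma cutCard_add_cutCard_eq_sdiff_add_sdiff [Fintype V] (A B : Finset V) :
    cutCard fst snd J A + cutCard fst snd J B =
      cutCard fst snd J (A \ B) + cutCard fst snd J (B \ A) +
        2 * btw fst snd J (A ∩ B) (univ \ (A ∪ B)) := by
  simp only [cutCard_eq_sum, btw_eq_sum, mul_sum, ← sum_add_distrib]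
  refine sum_congr rfl fun e _ => ?_
  by_cases h1 : fst e ∈ A <;> by_cases h2 : fst e ∈ B <;>
    by_cases h3 : snd e ∈ A <;> by_cases h4 : snd e ∈ B <;>
    simp [h1, h2, h3, h4]

lemma cutCard_inter_add_cutCard_sdiff (A B : Finset V) :
    cutCard fst snd J (A ∩ B) + cutCard fst snd J (A \ B) =
      cutCard fst snd J A + 2 * btw fst snd J (A ∩ B) (A \ B) := by
  simp only [cutCard_eq_sum, btw_eq_sum, mul_sum, ← sum_add_distrib]
  refine sum_congr rfl fun e _ => ?_
  by_cases h1 : fst e ∈ A <;> by_cases h2 : fst e ∈ B <;>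
    by_cases h3 : snd e ∈ A <;> by_cases h4 : snd e ∈ B <;>
    simp [h1, h2, h3, h4]

end CutIdentities

lemma forall_corner_of_crossing {V : Type} [Fintype V] [DecidableEq V] {A B : Finset V}
    (P : Finset V → Prop) (hP : ∀ S : Finset V, S.Nonempty → S ≠ univ → P S)
    (hAB : ¬A ⊆ B) (hBA : ¬B ⊆ A) (hinter : (A ∩ B).Nonempty) (hunion : A ∪ B ≠ univ) :
    P (A ∩ B) ∧ P (A ∪ B) ∧ P (A \ B) ∧ P (B \ A) := by
  obtain ⟨a, haA, haB⟩ := not_subset.mp hAB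
  obtain ⟨b, hbB, hbA⟩ := not_subset.mp hBA
  obtain ⟨c, hc⟩ := hinter
  have ne_univ {S : Finset V} {x : V} (hx : x ∉ S) : S ≠ univ := fun h => hx (h ▸ mem_univ x)
  refine ⟨hP _ ⟨c, hc⟩ (ne_univ (x := b) (by simp [hbA])),
    hP _ ⟨c, mem_union_left _ (mem_of_mem_inter_left hc)⟩ hunion,
    hP _ ⟨a, mem_sdiff.mpr ⟨haA, haB⟩⟩ (ne_univ (x := c) (by simp [mem_of_mem_inter_right hc])),
    hP _ ⟨b, mem_sdiff.mpr ⟨hbB, hbA⟩⟩ (ne_univ (x := c) (by simp [mem_of_mem_inter_left hc]))⟩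

theorem cutCard_not_crossing_of_odd {V ι : Type} [Fintype V] [DecidableEq V] [DecidableEq ι]
    {fst snd : ι → V} {J : Finset ι} {k : ℕ} (hk : Odd k)
    (hconn : ∀ S : Finset V, S.Nonempty → S ≠ univ → k ≤ cutCard fst snd J S)
    {A B : Finset V} (hA : cutCard fst snd J A = k) (hB : cutCard fst snd J B = k) :
    A ⊆ B ∨ B ⊆ A ∨ A ∩ B = ∅ ∨ A ∪ B = univ := by
  by_contra! ⟨hAB, hBA, hinter, hunion⟩
  obtain ⟨h_inter, h_union, h_AB, h_BA⟩ :=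
    forall_corner_of_crossing _ hconn hAB hBA hinter hunion
  have e_union := cutCard_add_cutCard_eq_inter_add_union fst snd J A B
  have e_sdiff := cutCard_add_cutCard_eq_sdiff_add_sdiff fst snd J A B
  have e_parity := cutCard_inter_add_cutCard_sdiff fst snd J A B
  have hk_inter : cutCard fst snd J (A ∩ B) = k := by omega
  have hk_AB : cutCard fst snd J (A \ B) = k := by omega
  obtain ⟨m, rfl⟩ := hk
  omega

theorem stmt18_general {V ι : Type} [Fintype V] [DecidableEq V] [DecidableEq ι]
    (fst snd : ι → V) (J U : Finset ι) (k : ℕ) (hk : Odd k)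
    (hconn : ∀ S : Finset V, S.Nonempty → S ≠ Finset.univ → k ≤ cutCard fst snd J S)
    (F₁ : Finset V → Prop)
    (hF₁ : ∀ S, F₁ S ↔ S.Nonempty ∧ S ≠ Finset.univ ∧
        cutCard fst snd J S = k ∧ 1 ≤ cutCard fst snd U S) :
    ∀ A B, F₁ A → F₁ B →
      A ⊆ B ∨ B ⊆ A ∨ A ∩ B = ∅ ∨ A ∪ B = Finset.univ := by
  intro A B hA hB
  exact cutCard_not_crossing_of_odd hk hconn ((hF₁ A).mp hA).2.2.1 ((hF₁ B).mp hB).2.2.1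

theorem stmt18 {V ι : Type} [Fintype V] [DecidableEq V] [DecidableEq ι]
    (fst snd : ι → V) (J U : Finset ι) (hU : U ⊆ J) (k : ℕ) (hk : Odd k)
    (hconn : ∀ S : Finset V, S.Nonempty → S ≠ Finset.univ → k ≤ cutCard fst snd J S)
    (F₁ : Finset V → Prop)
    (hF₁ : ∀ S, F₁ S ↔ S.Nonempty ∧ S ≠ Finset.univ ∧
        cutCard fst snd J S = k ∧ 1 ≤ cutCard fst snd U S) :
    ∀ A B, F₁ A → F₁ B →
      A ⊆ B ∨ B ⊆ A ∨ A ∩ B = ∅ ∨ A ∪ B = Finset.univ :=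
  stmt18_general fst snd J U k hk hconn F₁ hF₁
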